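/- arXiv:2310.11369 — 4 statements merged into one kernel-verified Lean document; each statement's English description precedes it below -/
import Mathlib

section
/- Every poset satisfying the σ-w-finite chain condition satisfies the σ-finite chain condition of Horn and Tarski. -/
/-- Two elements of a poset are compatible if they have a common lower bound. -/
def Compat {P : Type} [Preorder P] (p q : P) : Prop := ∃ r, r ≤ p ∧ r ≤ q

/-- Horn–Tarski: `P` is σ-finite-c.c. if `P = ⋃ₙ Pₙ` where no `Pₙ` contains an infinite
antichain of `P`. -/
def SigmaFiniteCC (P : Type) [Preorder P] : Prop :=
  ∃ Pn : ℕ → Set P, (⋃ n, Pn n) = Set.univ ∧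
    ∀ n, ∀ S : Set P, S ⊆ Pn n → (S.Pairwise fun p q => ¬ Compat p q) → S.Finite

/-- `P` is σ-w-finite-c.c. if `P = ⋃ₖ Pₖ` such that for every `k` and every sequence
`⟨(pᵢ, qᵢ) : i ∈ ω⟩` from `Pₖ × Pₖ` with each `pᵢ` compatible with `qᵢ`, there are `i < j`
with `pᵢ` compatible with `qⱼ`. -/
def SigmaWFiniteCC (P : Type) [Preorder P] : Prop :=
  ∃ Pk : ℕ → Set P, (⋃ k, Pk k) = Set.univ ∧
    ∀ k, ∀ p q : ℕ → P, (∀ i, p i ∈ Pk k) → (∀ i, q i ∈ Pk k) →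
      (∀ i, Compat (p i) (q i)) → ∃ i j, i < j ∧ Compat (p i) (q j)

/-- Every poset satisfying the σ-w-finite chain condition satisfies the σ-finite chain
condition of Horn and Tarski. -/
theorem stmt3 (P : Type) [PartialOrder P] (h : SigmaWFiniteCC P) : SigmaFiniteCC P := by
  obtain ⟨Pk, hcov, hk⟩ := h
  refine ⟨Pk, hcov, fun n S hS hanti => ?_⟩
  by_contra hfin
  have hinf : S.Infinite := hfin
  let e := hinf.natEmbedding
  have hmem : ∀ i, (e i : P) ∈ Pk n := fun i => hS (e i).2
  have hcpt : ∀ i, Compat ((e i : P)) ((e i : P)) := fun i => ⟨e i, le_refl _, le_refl _⟩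
  obtain ⟨i, j, hij, hc⟩ := hk n (fun i => e i) (fun i => e i) hmem hmem hcpt
  exact hanti (e i).2 (e j).2 (fun heq => hij.ne (e.injective (Subtype.ext heq))) hc
end

section
/- Let P = ⋃_{k∈ω} P_k witness that P is σ-w-finite-c.c. Then for every k ∈ ω and every sequence ⟨(a_i, b_i) : i ∈ ω⟩ of pairs of finite subsets of P_k such that a_i ∥ b_i for every i (i.e., some element of a_i is compatible with some element of b_i), there exist l < j in ω such that a_l ∥ b_j. -/
/-- For finite subsets `a, b` of a poset, `a ∥ b` iff some element of `a` is compatible with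
some element of `b`. -/
def FCompat {P : Type} [Preorder P] (a b : Finset P) : Prop :=
  ∃ r ∈ a, ∃ t ∈ b, Compat r t

/-- If `P = ⋃ₖ Pₖ` witnesses that `P` is σ-w-finite-c.c., then for every `k` and every
sequence `⟨(aᵢ, bᵢ) : i ∈ ω⟩` of pairs of finite subsets of `Pₖ` with `aᵢ ∥ bᵢ` for all `i`,
there exist `l < j` with `a_l ∥ b_j`. -/
theorem stmt4 (P : Type) [PartialOrder P] (Pk : ℕ → Set P)
    (hcover : (⋃ k, Pk k) = Set.univ)
    (hw : ∀ k, ∀ p q : ℕ → P, (∀ i, p i ∈ Pk k) → (∀ i, q i ∈ Pk k) →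
      (∀ i, Compat (p i) (q i)) → ∃ i j, i < j ∧ Compat (p i) (q j)) :
    ∀ k, ∀ a b : ℕ → Finset P, (∀ i, (a i : Set P) ⊆ Pk k) → (∀ i, (b i : Set P) ⊆ Pk k) →
      (∀ i, FCompat (a i) (b i)) → ∃ l j, l < j ∧ FCompat (a l) (b j) := by
  intro k a b ha hb hcomp
  choose p hp q hq hpq using hcomp
  obtain ⟨i, j, hij, hc⟩ := hw k p q (fun i => ha i (hp i)) (fun i => hb i (hq i)) hpq
  exact ⟨i, j, hij, p i, hp i, q j, hq j, hc⟩
end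

section
/- If J is a uniform normal ideal on a regular uncountable cardinal κ, then for each n ∈ ω the Fubini power J^n is normal in the following sense: for any family ⟨D_a : a ∈ [κ]^{<ω}⟩ of sets in the dual filter (J^n)^*, the diagonal intersection D = {b ∈ [κ]^n : for all finite a ⊆ min b, b ∈ D_a} belongs to (J^n)^*. -/
/-!
The complement of `diagInter D` is `J^n`-small by induction on `n`: its section at `γ` lies in
the complement of `diagInter D'`, where `D' a` is the section of `D a` at `γ`, as soon as every
`D' a` with `a` below `γ` has small complement. The `γ` for which this fails form a diagonal union
over finite sets, which lies in `J` because normality yields σ-completeness and hence closure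
under such unions (peel off one element of `a` at a time). On increasing tuples `diagInter D` is
the diagonal intersection of the theorem, and `J^n` concentrates on increasing tuples since, by
normality again, `J`-almost every initial segment of `α` lies in `J`.
-/

open Cardinal

/-- `J` is an ideal of subsets of `α`. -/
def IsIdeal {α : Type} (J : Set (Set α)) : Prop :=
  ∅ ∈ J ∧ (∀ A B : Set α, A ∈ J → B ⊆ A → B ∈ J) ∧
    (∀ A B : Set α, A ∈ J → B ∈ J → A ∪ B ∈ J)

/-- `J` is proper: the whole space is not in `J`. -/
def ProperIdeal {α : Type} (J : Set (Set α)) : Prop := Set.univ ∉ J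

/-- `J` is uniform: every set of cardinality `< |α|` is in `J`. -/
def UniformIdeal {α : Type} (J : Set (Set α)) : Prop := ∀ A : Set α, #A < #α → A ∈ J

/-- `J` is normal: closed under diagonal unions. -/
def NormalIdeal {α : Type} [LT α] (J : Set (Set α)) : Prop :=
  ∀ A : α → Set α, (∀ i, A i ∈ J) → {β : α | ∃ i < β, β ∈ A i} ∈ J

/-- The section of `X ⊆ [κ]^{n+1}` at the first coordinate `γ`. -/
def seca {α : Type} (γ : α) {n : ℕ} (X : Set (Fin (n + 1) → α)) : Set (Fin n → α) :=
  {b | Fin.cons γ b ∈ X}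

/-- The `n`-th Fubini power `J^n` of an ideal `J` on `α`, as an ideal on `α^n`:
`X ∈ J^{n+1}` iff the set of `γ` whose section lies in `J^n` is in the dual filter `J^*`. -/
def Fub {α : Type} (J : Set (Set α)) : (n : ℕ) → Set (Set (Fin n → α))
  | 0 => {X | X = ∅}
  | n + 1 => {X | {γ : α | seca γ X ∈ Fub J n}ᶜ ∈ J}

namespace IsIdeal

variable {α : Type} {J : Set (Set α)}

theorem empty_mem (hJ : IsIdeal J) : ∅ ∈ J := hJ.1

theorem mono (hJ : IsIdeal J) {A B : Set α} (hA : A ∈ J) (hBA : B ⊆ A) : B ∈ J :=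
  hJ.2.1 A B hA hBA

theorem union_mem (hJ : IsIdeal J) {A B : Set α} (hA : A ∈ J) (hB : B ∈ J) : A ∪ B ∈ J :=
  hJ.2.2 A B hA hB

end IsIdeal

section Fubini

variable {α : Type} {J : Set (Set α)}

theorem mem_fub_zero {X : Set (Fin 0 → α)} : X ∈ Fub J 0 ↔ X = ∅ := Iff.rfl

theorem mem_fub_succ {n : ℕ} {X : Set (Fin (n + 1) → α)} :
    X ∈ Fub J (n + 1) ↔ {γ | seca γ X ∈ Fub J n}ᶜ ∈ J := Iff.rfl

theorem IsIdeal.fub (hJ : IsIdeal J) : ∀ n, IsIdeal (Fub J n)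
  | 0 => ⟨rfl, fun _ _ hA hBA => Set.subset_empty_iff.mp (hA ▸ hBA),
      fun _ _ hA hB => by rw [mem_fub_zero.mp hA, mem_fub_zero.mp hB, Set.empty_union]; rfl⟩
  | n + 1 => by
    have ih := hJ.fub n
    refine ⟨?_, fun A B hA hBA => ?_, fun A B hA hB => ?_⟩
    · simpa [mem_fub_succ, seca, ih.empty_mem] using hJ.empty_mem
    · exact hJ.mono hA fun γ hγ hB => hγ (ih.mono hB fun b hb => hBA hb)
    · refine hJ.mono (hJ.union_mem hA hB) fun γ hγ => ?_
      by_contra hAB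
      simp only [Set.mem_union, Set.mem_compl_iff, Set.mem_ofPred_eq, not_or, not_not] at hγ hAB
      exact hγ (ih.union_mem hAB.1 hAB.2)

variable [LinearOrder α]

theorem IsIdeal.setOf_exists_le_mem_fub (hJ : IsIdeal J) {γ : α} (hγ : Set.Iic γ ∈ J) :
    ∀ n, {b : Fin n → α | ∃ i, b i ≤ γ} ∈ Fub J n
  | 0 => by simp [mem_fub_zero]
  | n + 1 => hJ.mono hγ fun δ hδ => not_lt.mp fun hγδ => hδ <|
      (hJ.fub n).mono (hJ.setOf_exists_le_mem_fub hγ n) fun b hb => by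
        simpa [seca, Fin.exists_fin_succ, not_le.mpr hγδ] using hb

theorem IsIdeal.setOf_not_strictMono_mem_fub (hJ : IsIdeal J)
    (hIic : {γ | Set.Iic γ ∉ J} ∈ J) : ∀ n, {b : Fin n → α | ¬StrictMono b} ∈ Fub J n
  | 0 => by simp [mem_fub_zero, Subsingleton.strictMono]
  | n + 1 => hJ.mono hIic fun γ hγ hγJ => hγ <|
      (hJ.fub n).mono ((hJ.fub n).union_mem (hJ.setOf_not_strictMono_mem_fub hIic n)
        (hJ.setOf_exists_le_mem_fub hγJ n)) fun b hb => by
          simp only [seca, Set.mem_ofPred_eq, Fin.strictMono_cons, not_and_or, not_forall,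
            not_lt] at hb
          exact hb.symm

/-- Asking `a` to lie below every coordinate, rather than below the first, makes the diagonal
intersection behave well under sections without assuming the tuples increasing. -/
def diagInter {n : ℕ} (D : Finset α → Set (Fin n → α)) : Set (Fin n → α) :=
  {b | ∀ a : Finset α, (∀ x ∈ a, ∀ i, x < b i) → b ∈ D a}

def diagUnion (B : Finset α → Set α) : Set α :=
  {β | ∃ a : Finset α, (∀ x ∈ a, x < β) ∧ β ∈ B a}

theorem compl_diagInter_mem_fub (hJ : IsIdeal J)
    (hdiag : ∀ B : Finset α → Set α, (∀ a, B a ∈ J) → diagUnion B ∈ J) :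
    ∀ n (D : Finset α → Set (Fin n → α)), (∀ a, (D a)ᶜ ∈ Fub J n) → (diagInter D)ᶜ ∈ Fub J n
  | 0, D, hD => Set.eq_empty_of_forall_notMem fun b hb => hb fun a _ =>
      Set.notMem_compl_iff.mp (by rw [mem_fub_zero.mp (hD a)]; exact Set.notMem_empty b)
  | n + 1, D, hD => by
    refine hJ.mono (hdiag _ hD) fun γ hγ => ?_
    by_contra hγD
    simp only [diagUnion, Set.mem_ofPred_eq, not_exists, not_and, Set.mem_compl_iff,
      not_not] at hγD
    let D' : Finset α → Set (Fin n → α) := fun a => {b | (∀ x ∈ a, x < γ) → Fin.cons γ b ∈ D a}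
    have hD' : ∀ a, (D' a)ᶜ ∈ Fub J n := fun a => by
      by_cases ha : ∀ x ∈ a, x < γ
      · exact (hJ.fub n).mono (hγD a ha) fun b hb hbD => hb fun _ => hbD
      · simpa [D', ha] using (hJ.fub n).empty_mem
    refine hγ ((hJ.fub n).mono (compl_diagInter_mem_fub hJ hdiag n D' hD') fun b hb hb' => ?_)
    exact hb fun a ha => hb' a (fun x hx i => ha x hx i.succ) fun x hx => ha x hx 0

end Fubini

namespace NormalIdeal

variable {α : Type} [LinearOrder α] {J : Set (Set α)}

theorem mem_of_injective_regressive (hn : NormalIdeal J) (hJ : IsIdeal J) (hu : UniformIdeal J)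
    (hα : 1 < #α) {S : Set α} (f : S → α) (hf : Function.Injective f) (hreg : ∀ β, f β < β) :
    S ∈ J := by
  let A : α → Set α := fun i => Subtype.val '' (f ⁻¹' {i})
  have hA : ∀ i, A i ∈ J := fun i => hu _ <| lt_of_le_of_lt
    (Cardinal.mk_le_one_iff_set_subsingleton.mpr ((Set.subsingleton_singleton.preimage hf).image _))
    hα
  exact hJ.mono (hn A hA) fun β hβ => ⟨f ⟨β, hβ⟩, hreg _, ⟨β, hβ⟩, rfl, rfl⟩

/-- Past the least `t` with `Set.Iic t ∉ J`, any injection into `Set.Iio t` is regressive. -/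
theorem setOf_Iic_notMem_mem [WellFoundedLT α] (hn : NormalIdeal J) (hJ : IsIdeal J)
    (hu : UniformIdeal J) (hα : ℵ₀ ≤ #α) : {γ | Set.Iic γ ∉ J} ∈ J := by
  rcases Set.eq_empty_or_nonempty {γ | Set.Iic γ ∉ J} with hT | hT
  · rw [hT]; exact hJ.empty_mem
  obtain ⟨t, ht, htmin⟩ := wellFounded_lt.has_min _ hT
  have hIio : #α ≤ #(Set.Iio t) := by
    by_contra! hlt
    refine ht (hu _ ?_)
    rw [← Set.Iio_insert]
    exact Cardinal.mk_insert_le.trans_lt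
      (Cardinal.add_lt_of_lt hα hlt (Cardinal.one_lt_aleph0.trans_le hα))
  obtain ⟨e⟩ := (Cardinal.le_def _ _).mp ((Cardinal.mk_set_le (Set.Ici t)).trans hIio)
  exact hJ.mono (hn.mem_of_injective_regressive hJ hu (Cardinal.one_lt_aleph0.trans_le hα)
    (fun β => (e β : α)) (Subtype.val_injective.comp e.injective) fun β => (e β).2.trans_le β.2)
    fun γ hγ => not_lt.mp (htmin γ hγ)

end NormalIdeal

section FinitePredecessors

variable {α : Type} [LinearOrder α]

theorem countable_setOf_Iio_finite : {x : α | (Set.Iio x).Finite}.Countable :=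
  (Set.mapsTo_univ (fun x => (Set.Iio x).ncard) _).countable_of_injOn
    (StrictMonoOn.injOn fun _ _ _ hy hxy => Set.ncard_lt_ncard (Set.Iio_ssubset_Iio hxy) hy)
    Set.countable_univ

theorem infinite_setOf_Iio_finite [WellFoundedLT α] [Infinite α] :
    {x : α | (Set.Iio x).Finite}.Infinite := fun hF => by
  obtain ⟨x, hx, hmin⟩ := wellFounded_lt.has_min _ hF.infinite_compl.nonempty
  exact hx (hF.subset fun y hy => not_not.mp fun hy' => hmin y hy' hy)

end FinitePredecessors

namespace NormalIdeal

variable {α : Type} [LinearOrder α] [WellFoundedLT α] {J : Set (Set α)}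

/-- Index the `A m` by the first `ω` points of `α`: a point of the union not in the diagonal
union lies below one of them, hence in a countable set. -/
theorem iUnion_nat_mem (hn : NormalIdeal J) (hJ : IsIdeal J) (hu : UniformIdeal J)
    (hα : ℵ₀ < #α) (A : ℕ → Set α) (hA : ∀ m, A m ∈ J) : ⋃ m, A m ∈ J := by
  have : Infinite α := Cardinal.infinite_iff.mpr hα.le
  let F := {x : α | (Set.Iio x).Finite}
  let c : ℕ ↪ F := infinite_setOf_Iio_finite.natEmbedding
  have hc : Function.Injective fun m => (c m : α) := Subtype.val_injective.comp c.injective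
  let A' : α → Set α := Function.extend (fun m => (c m : α)) A fun _ => ∅
  have hA' : ∀ j, A' j ∈ J := fun j => by
    by_cases hj : ∃ m, (c m : α) = j
    · obtain ⟨m, rfl⟩ := hj
      simpa only [A', hc.extend_apply] using hA m
    · simpa only [A', Function.extend_apply' _ _ _ hj] using hJ.empty_mem
  have hF : F ∈ J :=
    hu F (Cardinal.mk_le_aleph0_iff.mpr countable_setOf_Iio_finite.to_subtype |>.trans_lt hα)
  refine hJ.mono (hJ.union_mem (hn A' hA') hF) fun β hβ => ?_
  obtain ⟨m, hm⟩ := Set.mem_iUnion.mp hβ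
  rcases lt_or_ge (c m : α) β with hlt | hle
  · exact Or.inl ⟨c m, hlt, by simpa only [A', hc.extend_apply] using hm⟩
  · exact Or.inr ((c m).2.subset (Set.Iio_subset_Iio hle))

theorem diagUnion_mem (hn : NormalIdeal J) (hJ : IsIdeal J) (hu : UniformIdeal J)
    (hα : ℵ₀ < #α) (B : Finset α → Set α) (hB : ∀ a, B a ∈ J) : diagUnion B ∈ J := by
  have hcard : ∀ k (B : Finset α → Set α), (∀ a, B a ∈ J) →
      {β | ∃ a : Finset α, a.card = k ∧ (∀ x ∈ a, x < β) ∧ β ∈ B a} ∈ J := by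
    intro k
    induction k with
    | zero =>
      refine fun B hB => hJ.mono (hB ∅) ?_
      rintro β ⟨a, ha, -, hβ⟩
      rwa [Finset.card_eq_zero.mp ha] at hβ
    | succ k ih =>
      refine fun B hB => hJ.mono (hn _ fun i => ih (fun a => B (insert i a)) fun a => hB _) ?_
      rintro β ⟨a, ha, hlt, hβ⟩
      obtain ⟨i, a', -, rfl, ha'⟩ := Finset.card_eq_succ.mp ha
      exact ⟨i, hlt i (Finset.mem_insert_self i a'), a', ha',
        fun x hx => hlt x (Finset.mem_insert_of_mem hx), hβ⟩
  exact hJ.mono (hn.iUnion_nat_mem hJ hu hα _ fun k => hcard k B hB) fun β ⟨a, hlt, hβ⟩ =>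
    Set.mem_iUnion.mpr ⟨a.card, a, rfl, hlt, hβ⟩

end NormalIdeal

theorem stmt5_general (α : Type) [LinearOrder α] (hwo : IsWellOrder α (· < ·))
    (hunc : ℵ₀ < #α)
    (J : Set (Set α)) (hJ : IsIdeal J) (hu : UniformIdeal J)
    (hn : NormalIdeal J)
    (n : ℕ) (hpos : 0 < n) (D : Finset α → Set (Fin n → α))
    (hD : ∀ a : Finset α, (D a)ᶜ ∈ Fub J n) :
    {b : Fin n → α | StrictMono b ∧
        ∀ a : Finset α, (∀ x ∈ a, x < b ⟨0, hpos⟩) → b ∈ D a}ᶜ ∈ Fub J n := by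
  have : WellFoundedLT α := hwo.toIsWellFounded
  have hmono := hJ.setOf_not_strictMono_mem_fub (hn.setOf_Iic_notMem_mem hJ hu hunc.le) n
  have hdiag := compl_diagInter_mem_fub hJ (hn.diagUnion_mem hJ hu hunc) n D hD
  refine (hJ.fub n).mono ((hJ.fub n).union_mem hmono hdiag) fun b hb => ?_
  by_contra hb'
  simp only [Set.mem_union, Set.mem_ofPred_eq, Set.mem_compl_iff, not_or, not_not] at hb'
  obtain ⟨hb_mono, hb_diag⟩ := hb'
  exact hb ⟨hb_mono, fun a ha => hb_diag a fun x hx i =>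
    (ha x hx).trans_le (hb_mono.monotone (Fin.le_iff_val_le_val.mpr (Nat.zero_le _)))⟩

/-- Normality of the Fubini power `J^n`: the diagonal intersection
`{b ∈ [κ]^n : ∀ finite a ⊆ min b, b ∈ D_a}` of sets `D_a` in the dual filter `(J^n)^*`
belongs to `(J^n)^*`. -/
theorem stmt5 (α : Type) [LinearOrder α] (hwo : IsWellOrder α (· < ·))
    (hreg : (#α).IsRegular) (hunc : ℵ₀ < #α)
    (J : Set (Set α)) (hJ : IsIdeal J) (hp : ProperIdeal J) (hu : UniformIdeal J)
    (hn : NormalIdeal J)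
    (n : ℕ) (hpos : 0 < n) (D : Finset α → Set (Fin n → α))
    (hD : ∀ a : Finset α, (D a)ᶜ ∈ Fub J n) :
    {b : Fin n → α | StrictMono b ∧
        ∀ a : Finset α, (∀ x ∈ a, x < b ⟨0, hpos⟩) → b ∈ D a}ᶜ ∈ Fub J n :=
  stmt5_general α hwo hunc J hJ hu hn n hpos D hD
end

section
/- Let J be a uniform normal ideal on a regular uncountable cardinal κ and let P be a poset satisfying the σ-finite chain condition. Then P is J-Knaster: for every J-positive set X ⊆ κ and every family ⟨q_α ∈ P : α ∈ X⟩, there exists a J-positive Y ⊆ X such that for all α < β in Y, q_α and q_β are compatible in P. -/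
open Cardinal

/-- A uniform normal ideal on an uncountable well-order is σ-complete. -/
theorem countable_union_mem_ideal {α : Type} [LinearOrder α] (hwo : IsWellOrder α (· < ·))
    (hunc : ℵ₀ < #α) (J : Set (Set α)) (hJ : IsIdeal J) (hu : UniformIdeal J)
    (hn : NormalIdeal J) (A : ℕ → Set α) (hA : ∀ n, A n ∈ J) : (⋃ n, A n) ∈ J := by
  haveI : Infinite α := Cardinal.infinite_iff.mpr hunc.le
  have wf : WellFounded ((· < ·) : α → α → Prop) := hwo.toIsWellFounded.wf
  -- enumerate the first ω elements of the well-order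
  set step : Finset α → α := fun F => wf.min ((↑F : Set α)ᶜ) (F.finite_toSet.infinite_compl).nonempty with hstep
  set E : ℕ → Finset α := fun n => Nat.rec (∅ : Finset α) (fun _ Ek => insert (step Ek) Ek) n with hE
  set e : ℕ → α := fun n => step (E n) with he
  have hnotmem : ∀ n, e n ∉ E n := fun n h =>
    wf.min_mem ((↑(E n) : Set α)ᶜ) (Finset.finite_toSet (E n)).infinite_compl.nonempty
      (Finset.mem_coe.mpr h)
  have hEsucc : ∀ n, E (n + 1) = insert (e n) (E n) := fun n => rfl
  have hEmono : ∀ m n, m ≤ n → E m ⊆ E n := by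
    intro m n hmn
    induction n with
    | zero => simp_all
    | succ k ih =>
      rcases Nat.lt_succ_iff_lt_or_eq.mp (Nat.lt_succ_of_le hmn) with h | h
      · exact (ih (Nat.lt_succ_iff.mp h)).trans
          (by rw [hEsucc]; exact Finset.subset_insert _ _)
      · subst h; rfl
  have hseg : ∀ n, ∀ γ : α, γ ≤ e n → γ ∈ E (n + 1) := by
    intro n γ hγ
    rcases lt_or_eq_of_le hγ with h | h
    · rw [hEsucc]
      refine Finset.mem_insert_of_mem ?_
      by_contra hc
      exact wf.not_lt_min ((↑(E n) : Set α)ᶜ) (by simpa using hc) h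
    · rw [h, hEsucc]; exact Finset.mem_insert_self _ _
  have einj : Function.Injective e := by
    have key : ∀ m n, m < n → e m ≠ e n := by
      intro m n hmn heq
      exact hnotmem n (heq ▸ hEmono (m + 1) n hmn (hseg m (e m) le_rfl))
    intro m n heq
    by_contra hne
    rcases Ne.lt_or_gt hne with h | h
    · exact key m n h heq
    · exact key n m h heq.symm
  -- the diagonal union trick
  set B : α → Set α := fun i => {γ | ∃ n, e n = i ∧ γ ∈ A n} with hB
  have hBJ : ∀ i, B i ∈ J := by
    intro i
    by_cases h : ∃ n, e n = i
    · obtain ⟨n, hn'⟩ := h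
      refine hJ.2.1 (A n) (B i) (hA n) ?_
      rintro γ ⟨m, hm, hγ⟩
      rwa [einj (hm.trans hn'.symm)] at hγ
    · refine hJ.2.1 ∅ (B i) hJ.1 ?_
      rintro γ ⟨m, hm, _⟩
      exact h ⟨m, hm⟩
  have hD : {β : α | ∃ i < β, β ∈ B i} ∈ J := hn B hBJ
  set C : Set α := {γ | ∃ n, γ ≤ e n} with hC
  have hCJ : C ∈ J := by
    apply hu
    have hcnt : C.Countable := by
      have : C ⊆ ⋃ n, (↑(E (n + 1)) : Set α) := by
        rintro γ ⟨n, hγ⟩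
        exact Set.mem_iUnion.mpr ⟨n, hseg n γ hγ⟩
      exact (Set.countable_iUnion fun n => (E (n + 1)).finite_toSet.countable).mono this
    exact lt_of_le_of_lt hcnt.le_aleph0 hunc
  refine hJ.2.1 ({β : α | ∃ i < β, β ∈ B i} ∪ C) (⋃ n, A n) (hJ.2.2 _ _ hD hCJ) ?_
  intro γ hγ
  obtain ⟨n, hγn⟩ := Set.mem_iUnion.mp hγ
  rcases lt_or_ge (e n) γ with h | h
  · exact Or.inl ⟨e n, h, n, rfl, hγn⟩
  · exact Or.inr ⟨n, h⟩

set_option maxHeartbeats 2000000 in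
/-- A σ-finite-c.c. poset is `J`-Knaster for any uniform normal ideal `J` on a regular
uncountable cardinal: every family indexed by a `J`-positive set has a `J`-positive
subfamily of pairwise compatible conditions. -/
theorem stmt7 (α : Type) [LinearOrder α] (hwo : IsWellOrder α (· < ·))
    (hreg : (#α).IsRegular) (hunc : ℵ₀ < #α)
    (J : Set (Set α)) (hJ : IsIdeal J) (hp : ProperIdeal J) (hu : UniformIdeal J)
    (hn : NormalIdeal J)
    (P : Type) [PartialOrder P] (hP : SigmaFiniteCC P)
    (X : Set α) (hX : X ∉ J) (q : α → P) :
    ∃ Y ⊆ X, Y ∉ J ∧ ∀ a ∈ Y, ∀ b ∈ Y, a < b → Compat (q a) (q b) := by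
  classical
  haveI : Infinite α := Cardinal.infinite_iff.mpr hunc.le
  obtain ⟨Pn, hcov, hanti⟩ := hP
  have hns : ∀ p : P, ∃ n, p ∈ Pn n := by
    intro p
    have : p ∈ ⋃ n, Pn n := hcov ▸ Set.mem_univ p
    exact Set.mem_iUnion.mp this
  choose np hnp using hns
  set Xn : ℕ → Set α := fun k => {a ∈ X | np (q a) = k} with hXn
  have hXsub : X ⊆ ⋃ k, Xn k := fun a ha => Set.mem_iUnion.mpr ⟨np (q a), ha, rfl⟩
  have hk : ∃ k, Xn k ∉ J := by
    by_contra hc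
    push_neg at hc
    exact hX (hJ.2.1 _ _ (countable_union_mem_ideal hwo hunc J hJ hu hn Xn hc) hXsub)
  obtain ⟨k, hk⟩ := hk
  set S : Set α := Xn k with hS
  have hSX : S ⊆ X := fun a ha => ha.1
  have hqS : ∀ a ∈ S, q a ∈ Pn k := fun a ha => ha.2 ▸ hnp (q a)
  -- key claim: a positive subset on which every "incompatibility tail" is small
  have key : ∃ S', S' ⊆ S ∧ S' ∉ J ∧
      ∀ β ∈ S', {γ ∈ S' | β < γ ∧ ¬ Compat (q β) (q γ)} ∈ J := by
    by_contra hcon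
    push_neg at hcon
    -- choice function
    have hcon' : ∀ S' : Set α, S' ⊆ S → S' ∉ J →
        ∃ β, β ∈ S' ∧ {γ ∈ S' | β < γ ∧ ¬ Compat (q β) (q γ)} ∉ J := by
      intro S' h1 h2
      obtain ⟨β, hβ1, hβ2⟩ := hcon S' h1 h2
      exact ⟨β, hβ1, hβ2⟩
    set bb : Set α → α := fun S' =>
      if h : S' ⊆ S ∧ S' ∉ J then (hcon' S' h.1 h.2).choose else Classical.arbitrary α
      with hbbdef
    have hbb : ∀ S' : Set α, S' ⊆ S ∧ S' ∉ J → bb S' ∈ S' ∧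
        {γ ∈ S' | bb S' < γ ∧ ¬ Compat (q (bb S')) (q γ)} ∉ J := by
      intro S' h
      simp only [hbbdef, dif_pos h]
      exact (hcon' S' h.1 h.2).choose_spec
    set Ss : ℕ → Set α := fun n => Nat.rec S
      (fun _ S' => {γ ∈ S' | bb S' < γ ∧ ¬ Compat (q (bb S')) (q γ)}) n with hSs
    have hSsucc : ∀ n, Ss (n + 1) = {γ ∈ Ss n | bb (Ss n) < γ ∧ ¬ Compat (q (bb (Ss n))) (q γ)} :=
      fun n => rfl
    have hSsub : ∀ n, Ss n ⊆ S ∧ Ss n ∉ J := by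
      intro n
      induction n with
      | zero => exact ⟨subset_rfl, hk⟩
      | succ m ih =>
        exact ⟨fun γ hγ => ih.1 hγ.1, (hbb (Ss m) ih).2⟩
    set β : ℕ → α := fun n => bb (Ss n) with hβ
    have hβmem : ∀ n, β n ∈ Ss n := fun n => (hbb _ (hSsub n)).1
    have hmono : ∀ m n, m ≤ n → Ss n ⊆ Ss m := by
      intro m n hmn
      induction n with
      | zero => simp_all
      | succ j ih =>
        rcases Nat.lt_succ_iff_lt_or_eq.mp (Nat.lt_succ_of_le hmn) with h | h
        · exact fun γ hγ => ih (Nat.lt_succ_iff.mp h) hγ.1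
        · subst h; exact subset_rfl
    have hij : ∀ i j, i < j → β i < β j ∧ ¬ Compat (q (β i)) (q (β j)) := by
      intro i j hlt
      have : β j ∈ Ss (i + 1) := hmono (i + 1) j hlt (hβmem j)
      exact ⟨this.2.1, this.2.2⟩
    have hqinj : Function.Injective fun i => q (β i) := by
      intro i j heq
      by_contra hne
      have : ∀ i j : ℕ, i < j → q (β i) ≠ q (β j) := by
        intro i j h hq
        exact (hij i j h).2 ⟨q (β i), le_rfl, hq ▸ le_rfl⟩
      rcases Ne.lt_or_gt hne with h | h
      · exact this i j h heq
      · exact this j i h heq.symm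
    have hsubPn : Set.range (fun i => q (β i)) ⊆ Pn k := by
      rintro _ ⟨i, rfl⟩
      exact hqS (β i) ((hSsub i).1 (hβmem i))
    have hpw : (Set.range fun i => q (β i)).Pairwise fun p p' => ¬ Compat p p' := by
      rintro _ ⟨i, rfl⟩ _ ⟨j, rfl⟩ hne
      have hijne : i ≠ j := fun h => hne (by rw [h])
      rcases Ne.lt_or_gt hijne with h | h
      · exact (hij i j h).2
      · intro ⟨r, h1, h2⟩
        exact (hij j i h).2 ⟨r, h2, h1⟩
    exact Set.infinite_range_of_injective hqinj (hanti k _ hsubPn hpw)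
  obtain ⟨S', hS'S, hS'J, hgood⟩ := key
  set B : α → Set α := fun i =>
    if i ∈ S' then {γ ∈ S' | i < γ ∧ ¬ Compat (q i) (q γ)} else ∅ with hBdef
  have hBJ : ∀ i, B i ∈ J := by
    intro i
    simp only [hBdef]
    split
    · exact hgood i ‹_›
    · exact hJ.1
  have hD : {γ : α | ∃ i < γ, γ ∈ B i} ∈ J := hn B hBJ
  refine ⟨S' \ {γ : α | ∃ i < γ, γ ∈ B i}, fun a ha => hSX (hS'S ha.1), ?_, ?_⟩
  · intro h
    refine hS'J (hJ.2.1 _ S' (hJ.2.2 _ _ h hD) ?_)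
    intro γ hγ
    by_cases hd : γ ∈ {γ : α | ∃ i < γ, γ ∈ B i}
    · exact Or.inr hd
    · exact Or.inl ⟨hγ, hd⟩
  · intro a ha b hb hab
    by_contra hnc
    refine hb.2 ⟨a, hab, ?_⟩
    simp only [hBdef, if_pos ha.1]
    exact ⟨hb.1, hab, hnc⟩
end
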